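/- The function ξ(t) = ψ(t)/(1+t) is strictly increasing and concave on [0,1], with ξ(0) = 0 and ξ(1) = log 2 (so ξ maps [0,1] onto [0, log 2]), where ψ(t) = (1/2)(1−√t)² log((1−√t)²) + (1/2)(1+√t)² log((1+√t)²) − (1+t) log(1+t). -/

import Mathlib

/-!
Substitute `t = s²`. Then `ξ(s²)` is an elementary function of `s` with derivative
`2 (1 - s²) L(s) / (1 + s²)²`, where `L(s) = log (1 + s) - log (1 - s)`; hence
`ξ'(s²) = (1 - s²) L(s) / (s (1 + s²)²) > 0` on `(0, 1)`. The derivative of this in `s` has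
the sign of `2s (1 + s²) - L(s) (1 + 6s² - 3s⁴)`, which is nonpositive: the power series of `L`
has nonnegative terms, so `L(s) ≥ 2s`, and `1 + s² ≤ 1 + 6s² - 3s⁴` on `[0, 1]`. So `ξ'` is
positive and decreasing on `(0, 1)`.
-/

/-- `ψ(t) = (1/2)(1−√t)² log((1−√t)²) + (1/2)(1+√t)² log((1+√t)²) − (1+t) log(1+t)`
(note `Real.log 0 = 0`). -/
noncomputable def psi (t : ℝ) : ℝ :=
  (1 / 2) * (1 - Real.sqrt t) ^ 2 * Real.log ((1 - Real.sqrt t) ^ 2) +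
    (1 / 2) * (1 + Real.sqrt t) ^ 2 * Real.log ((1 + Real.sqrt t) ^ 2) -
    (1 + t) * Real.log (1 + t)

/-- `ξ(t) = ψ(t)/(1+t)`. -/
noncomputable def xi (t : ℝ) : ℝ := psi t / (1 + t)

open Real Set

noncomputable def logRatio (s : ℝ) : ℝ := log (1 + s) - log (1 - s)

lemma two_mul_le_logRatio {s : ℝ} (h0 : 0 ≤ s) (h1 : s < 1) : 2 * s ≤ logRatio s := by
  have hs : |s| < 1 := by rwa [abs_of_nonneg h0]
  simpa [logRatio] using le_hasSum (hasSum_log_sub_log_of_abs_lt_one hs) 0 fun k _ => by positivity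

lemma hasDerivAt_logRatio {s : ℝ} (h0 : -1 < s) (h1 : s < 1) :
    HasDerivAt logRatio (2 / (1 - s ^ 2)) s := by
  have hp := ((hasDerivAt_id' s).const_add 1).log (by linarith)
  have hm := ((hasDerivAt_id' s).const_sub 1).log (by linarith)
  refine (hp.fun_sub hm).congr_deriv ?_
  rw [show 1 - s ^ 2 = (1 - s) * (1 + s) by ring]
  field_simp [show 1 - s ≠ 0 by linarith, show 1 + s ≠ 0 by linarith]
  ring

lemma two_mul_mul_le_logRatio_mul {s : ℝ} (h0 : 0 ≤ s) (h1 : s < 1) :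
    2 * s * (1 + s ^ 2) ≤ logRatio s * (1 + 6 * s ^ 2 - 3 * s ^ 4) := by
  have hs2 : s ^ 2 ≤ 1 := by nlinarith
  calc 2 * s * (1 + s ^ 2) ≤ 2 * s * (1 + 6 * s ^ 2 - 3 * s ^ 4) := by
        nlinarith [pow_nonneg h0 3]
    _ ≤ logRatio s * (1 + 6 * s ^ 2 - 3 * s ^ 4) :=
        mul_le_mul_of_nonneg_right (two_mul_le_logRatio h0 h1) (by nlinarith)

noncomputable def xiSqrt (s : ℝ) : ℝ :=
  ((1 - s) ^ 2 * log (1 - s) + (1 + s) ^ 2 * log (1 + s) - (1 + s ^ 2) * log (1 + s ^ 2)) /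
    (1 + s ^ 2)

lemma xi_eq_xiSqrt_sqrt {t : ℝ} (ht : 0 ≤ t) : xi t = xiSqrt √t := by
  rw [xi, xiSqrt, psi, log_pow, log_pow, sq_sqrt ht]
  push_cast
  ring

lemma hasDerivAt_xiSqrt {s : ℝ} (h0 : -1 < s) (h1 : s < 1) :
    HasDerivAt xiSqrt (2 * (1 - s ^ 2) * logRatio s / (1 + s ^ 2) ^ 2) s := by
  have hm : HasDerivAt (fun x => 1 - x) (-1) s := by simpa using (hasDerivAt_id s).const_sub 1
  have hp : HasDerivAt (fun x => 1 + x) 1 s := by simpa using (hasDerivAt_id s).const_add 1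
  have hq : HasDerivAt (fun x => 1 + x ^ 2) (2 * s) s := by
    simpa using (hasDerivAt_pow 2 s).const_add 1
  have hm0 : 1 - s ≠ 0 := by linarith
  have hp0 : 1 + s ≠ 0 := by linarith
  have hq0 : 1 + s ^ 2 ≠ 0 := by positivity
  refine ((((hm.fun_pow 2).fun_mul (hm.log hm0)).fun_add ((hp.fun_pow 2).fun_mul
    (hp.log hp0))).fun_sub (hq.fun_mul (hq.log hq0))).fun_div hq hq0 |>.congr_deriv ?_
  rw [logRatio]
  field_simp
  ring

lemma HasDerivAt.comp_sqrt {g : ℝ → ℝ} {g' t : ℝ} (ht : 0 < t) (hg : HasDerivAt g g' √t) :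
    HasDerivAt (fun x => g √x) (g' / (2 * √t)) t :=
  (hg.comp t (hasDerivAt_sqrt ht.ne')).congr_deriv (mul_one_div _ _)

lemma sqrt_mem_Ioo {t : ℝ} (ht : t ∈ Ioo 0 1) : √t ∈ Ioo 0 1 :=
  ⟨sqrt_pos.2 ht.1, (sqrt_lt' one_pos).2 (by simpa using ht.2)⟩

noncomputable def xiDeriv (s : ℝ) : ℝ := (1 - s ^ 2) * logRatio s / (s * (1 + s ^ 2) ^ 2)

lemma hasDerivAt_xi {t : ℝ} (ht : t ∈ Ioo 0 1) : HasDerivAt xi (xiDeriv √t) t := by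
  obtain ⟨hs0, hs1⟩ := sqrt_mem_Ioo ht
  have hxi : (fun x => xiSqrt √x) =ᶠ[nhds t] xi :=
    Filter.eventually_of_mem (Ioi_mem_nhds ht.1) fun x hx => (xi_eq_xiSqrt_sqrt (le_of_lt hx)).symm
  refine (((hasDerivAt_xiSqrt (by linarith) hs1).comp_sqrt ht.1).congr_of_eventuallyEq
    hxi.symm).congr_deriv ?_
  rw [xiDeriv]
  field_simp

lemma xiDeriv_pos {s : ℝ} (hs : s ∈ Ioo 0 1) : 0 < xiDeriv s := by
  obtain ⟨h0, h1⟩ := hs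
  have hL := two_mul_le_logRatio h0.le h1
  exact div_pos (mul_pos (by nlinarith) (by linarith)) (by positivity)

lemma hasDerivAt_xiDeriv {s : ℝ} (h0 : 0 < s) (h1 : s < 1) :
    HasDerivAt xiDeriv
      ((2 * s * (1 + s ^ 2) - logRatio s * (1 + 6 * s ^ 2 - 3 * s ^ 4)) /
        (s ^ 2 * (1 + s ^ 2) ^ 3)) s := by
  have hq : HasDerivAt (fun x => 1 - x ^ 2) (-(2 * s)) s := by
    simpa using (hasDerivAt_pow 2 s).const_sub 1
  have hd : HasDerivAt (fun x => x * (1 + x ^ 2) ^ 2)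
      ((1 + s ^ 2) ^ 2 + s * (2 * (1 + s ^ 2) * (2 * s))) s := by
    simpa using (hasDerivAt_id' s).fun_mul (((hasDerivAt_pow 2 s).const_add 1).fun_pow 2)
  refine ((hq.fun_mul (hasDerivAt_logRatio (by linarith) h1)).fun_div hd
    (by positivity)).congr_deriv ?_
  have : 1 - s ^ 2 ≠ 0 := by nlinarith
  field_simp
  ring

lemma antitoneOn_xiDeriv : AntitoneOn xiDeriv (Ioo 0 1) := by
  have hderiv (s : ℝ) (hs : s ∈ Ioo 0 1) := hasDerivAt_xiDeriv hs.1 hs.2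
  refine antitoneOn_of_deriv_nonpos (convex_Ioo 0 1)
    (fun s hs => (hderiv s hs).continuousAt.continuousWithinAt) ?_ ?_ <;> rw [interior_Ioo]
  · exact fun s hs => (hderiv s hs).differentiableAt.differentiableWithinAt
  · intro s hs
    rw [(hderiv s hs).deriv]
    exact div_nonpos_of_nonpos_of_nonneg
      (sub_nonpos.2 (two_mul_mul_le_logRatio_mul hs.1.le hs.2)) (by positivity)

lemma continuousOn_xi : ContinuousOn xi (Icc 0 1) := by
  have hpsi : Continuous psi := by
    have hml {f : ℝ → ℝ} (hf : Continuous f) : Continuous fun t => f t * log (f t) :=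
      continuous_mul_log.comp hf
    show Continuous fun t => psi t
    simp only [psi, mul_assoc]
    exact ((continuous_const.mul (hml (by fun_prop))).add
      (continuous_const.mul (hml (by fun_prop)))).sub (hml (by fun_prop))
  exact hpsi.continuousOn.div (by fun_prop) fun t ht => by linarith [ht.1]

lemma xi_one : xi 1 = log 2 := by
  rw [xi_eq_xiSqrt_sqrt zero_le_one, sqrt_one, xiSqrt]
  norm_num
  ring

/-- `ξ(t) = ψ(t)/(1+t)` is strictly increasing and concave on `[0,1]`, with
`ξ(0) = 0` and `ξ(1) = log 2`. -/
theorem xi_strictMono_concave :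
    StrictMonoOn xi (Set.Icc 0 1) ∧ ConcaveOn ℝ (Set.Icc 0 1) xi ∧
      xi 0 = 0 ∧ xi 1 = Real.log 2 := by
  have hderiv : ∀ t ∈ interior (Icc (0 : ℝ) 1), HasDerivAt xi (xiDeriv √t) t := by
    rw [interior_Icc]
    exact fun t ht => hasDerivAt_xi ht
  refine ⟨strictMonoOn_of_hasDerivWithinAt_pos (convex_Icc 0 1) continuousOn_xi
    (fun t ht => (hderiv t ht).hasDerivWithinAt) ?_,
    AntitoneOn.concaveOn_of_deriv (convex_Icc 0 1) continuousOn_xi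
    (fun t ht => (hderiv t ht).differentiableAt.differentiableWithinAt) ?_,
    by simp [xi, psi], xi_one⟩
  · rw [interior_Icc]
    exact fun t ht => xiDeriv_pos (sqrt_mem_Ioo ht)
  · intro a ha b hb hab
    rw [(hderiv a ha).deriv, (hderiv b hb).deriv]
    rw [interior_Icc] at ha hb
    exact antitoneOn_xiDeriv (sqrt_mem_Ioo ha) (sqrt_mem_Ioo hb) (sqrt_le_sqrt hab)
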